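/- arXiv:2211.00494 — 3 statements merged into one kernel-verified Lean document; each statement's English description precedes it below -/
import Mathlib

section
/- Every line through two distinct inflection points of the Fermat cubic x^3+y^3+z^3=0 contains exactly three inflection points. -/
noncomputable section

/-- The complex projective plane. -/
abbrev P2 := Projectivization ℂ (Fin 3 → ℂ)

/-- `P` is an inflection point of the Fermat cubic: it lies on `x³+y³+z³ = 0`
and on its Hessian `xyz = 0`. -/

def IsFlex (P : P2) : Prop :=
  P.rep 0 ^ 3 + P.rep 1 ^ 3 + P.rep 2 ^ 3 = 0 ∧ P.rep 0 * P.rep 1 * P.rep 2 = 0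

/-- `P` lies on the projective line with coefficient vector `l`. -/

def OnLine (P : P2) (l : Fin 3 → ℂ) : Prop :=
  l 0 * P.rep 0 + l 1 * P.rep 1 + l 2 * P.rep 2 = 0

/-! Every flex has a vanishing coordinate, so the nine flexes lie three by three on the sides of
the coordinate triangle, as the points `(1 : -c : 0)`, `(1 : 0 : -c)`, `(0 : 1 : -c)` with `c³ = 1`.
The line `l₀ x + l₁ y + l₂ z = 0` contains `(1 : -c : 0)` iff `l₀ = c l₁`, and similarly on the
other two sides, so it contains `n(l₀, l₁) + n(l₀, l₂) + n(l₁, l₂)` flexes, where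
`n(a, b) = #{c | c³ = 1, a = c b}` is `3` if `a = b = 0` and otherwise `1` or `0` according as
`a³ = b³` or not. As equality of cubes is transitive, this sum is never `2`. -/

namespace FermatCubic

open Projectivization

theorem cube_neg_div_eq_one {K : Type*} [Field K] {x y : K} (hx : x ≠ 0)
    (h : x ^ 3 + y ^ 3 = 0) :
    (-y / x) ^ 3 = 1 := by
  rw [div_pow, div_eq_one_iff_eq (pow_ne_zero 3 hx)]
  linear_combination -h

theorem isFlex_mk {v : Fin 3 → ℂ} (hv : v ≠ 0) :
    IsFlex (mk ℂ v hv) ↔ v 0 ^ 3 + v 1 ^ 3 + v 2 ^ 3 = 0 ∧ v 0 * v 1 * v 2 = 0 := by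
  obtain ⟨a, ha⟩ := exists_smul_eq_mk_rep ℂ v hv
  have hsum : ∀ x y z : ℂ,
      (a * x) ^ 3 + (a * y) ^ 3 + (a * z) ^ 3 = a ^ 3 * (x ^ 3 + y ^ 3 + z ^ 3) :=
    fun _ _ _ => by ring
  have hprod : ∀ x y z : ℂ, a * x * (a * y) * (a * z) = a ^ 3 * (x * y * z) :=
    fun _ _ _ => by ring
  simp [IsFlex, ← ha, Units.smul_def, hsum, hprod]

theorem onLine_mk {v : Fin 3 → ℂ} (hv : v ≠ 0) (l : Fin 3 → ℂ) :
    OnLine (mk ℂ v hv) l ↔ l 0 * v 0 + l 1 * v 1 + l 2 * v 2 = 0 := by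
  obtain ⟨a, ha⟩ := exists_smul_eq_mk_rep ℂ v hv
  have hsum : ∀ x y z : ℂ,
      l 0 * (a * x) + l 1 * (a * y) + l 2 * (a * z) = a * (l 0 * x + l 1 * y + l 2 * z) :=
    fun _ _ _ => by ring
  simp [OnLine, ← ha, Units.smul_def, hsum]

def sideZ (c : ℂ) : P2 := mk ℂ ![1, -c, 0] fun h => one_ne_zero (congrFun h 0)

def sideY (c : ℂ) : P2 := mk ℂ ![1, 0, -c] fun h => one_ne_zero (congrFun h 0)

def sideX (c : ℂ) : P2 := mk ℂ ![0, 1, -c] fun h => one_ne_zero (congrFun h 1)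

theorem onLine_sideZ (c : ℂ) (l : Fin 3 → ℂ) : OnLine (sideZ c) l ↔ l 0 = c * l 1 := by
  rw [sideZ, onLine_mk]; simp [sub_eq_zero, mul_comm, ← sub_eq_add_neg]

theorem onLine_sideY (c : ℂ) (l : Fin 3 → ℂ) : OnLine (sideY c) l ↔ l 0 = c * l 2 := by
  rw [sideY, onLine_mk]; simp [sub_eq_zero, mul_comm, ← sub_eq_add_neg]

theorem onLine_sideX (c : ℂ) (l : Fin 3 → ℂ) : OnLine (sideX c) l ↔ l 1 = c * l 2 := by
  rw [sideX, onLine_mk]; simp [sub_eq_zero, mul_comm, ← sub_eq_add_neg]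

theorem sideZ_injective : Function.Injective sideZ := by
  intro c d h
  obtain ⟨a, ha⟩ := (mk_eq_mk_iff' ℂ _ _ _ _).1 h
  have h0 := congrFun ha 0
  have h1 := congrFun ha 1
  simp_all

theorem sideY_injective : Function.Injective sideY := by
  intro c d h
  obtain ⟨a, ha⟩ := (mk_eq_mk_iff' ℂ _ _ _ _).1 h
  have h0 := congrFun ha 0
  have h1 := congrFun ha 2
  simp_all

theorem sideX_injective : Function.Injective sideX := by
  intro c d h
  obtain ⟨a, ha⟩ := (mk_eq_mk_iff' ℂ _ _ _ _).1 h
  have h0 := congrFun ha 1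
  have h1 := congrFun ha 2
  simp_all

theorem sideZ_ne_sideY {c d : ℂ} (hd : d ≠ 0) : sideZ c ≠ sideY d := by
  intro h
  obtain ⟨a, ha⟩ := (mk_eq_mk_iff' ℂ _ _ _ _).1 h
  have h0 := congrFun ha 0
  have h2 := congrFun ha 2
  simp_all

theorem sideZ_ne_sideX {c d : ℂ} : sideZ c ≠ sideX d := by
  intro h
  obtain ⟨a, ha⟩ := (mk_eq_mk_iff' ℂ _ _ _ _).1 h
  simpa using congrFun ha 0

theorem sideY_ne_sideX {c d : ℂ} : sideY c ≠ sideX d := by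
  intro h
  obtain ⟨a, ha⟩ := (mk_eq_mk_iff' ℂ _ _ _ _).1 h
  simpa using congrFun ha 0

theorem mk_eq_sideZ {v : Fin 3 → ℂ} (hv : v ≠ 0) (h0 : v 0 ≠ 0) (h2 : v 2 = 0) :
    mk ℂ v hv = sideZ (-v 1 / v 0) := by
  refine (mk_eq_mk_iff' ℂ _ _ _ _).2 ⟨v 0, funext fun i => ?_⟩
  fin_cases i <;> simp [h2, mul_div_cancel₀ _ h0]

theorem mk_eq_sideY {v : Fin 3 → ℂ} (hv : v ≠ 0) (h0 : v 0 ≠ 0) (h1 : v 1 = 0) :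
    mk ℂ v hv = sideY (-v 2 / v 0) := by
  refine (mk_eq_mk_iff' ℂ _ _ _ _).2 ⟨v 0, funext fun i => ?_⟩
  fin_cases i <;> simp [h1, mul_div_cancel₀ _ h0]

theorem mk_eq_sideX {v : Fin 3 → ℂ} (hv : v ≠ 0) (h1 : v 1 ≠ 0) (h0 : v 0 = 0) :
    mk ℂ v hv = sideX (-v 2 / v 1) := by
  refine (mk_eq_mk_iff' ℂ _ _ _ _).2 ⟨v 1, funext fun i => ?_⟩
  fin_cases i <;> simp [h0, mul_div_cancel₀ _ h1]

theorem isFlex_iff {P : P2} :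
    IsFlex P ↔ ∃ c : ℂ, c ^ 3 = 1 ∧ (P = sideZ c ∨ P = sideY c ∨ P = sideX c) := by
  constructor
  · induction P using Projectivization.ind with | h v hv => ?_
    rw [isFlex_mk]
    rintro ⟨hsum, hprod⟩
    rcases mul_eq_zero.1 hprod with h01 | h2
    · rcases mul_eq_zero.1 h01 with h0 | h1
      · have h1 : v 1 ≠ 0 := fun h1 => hv (funext fun i => by fin_cases i <;> simp_all)
        refine ⟨_, cube_neg_div_eq_one h1 ?_, .inr (.inr (mk_eq_sideX hv h1 h0))⟩
        simpa [h0] using hsum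
      · have h0 : v 0 ≠ 0 := fun h0 => hv (funext fun i => by fin_cases i <;> simp_all)
        refine ⟨_, cube_neg_div_eq_one h0 ?_, .inr (.inl (mk_eq_sideY hv h0 h1))⟩
        simpa [h1] using hsum
    · have h0 : v 0 ≠ 0 := fun h0 => hv (funext fun i => by fin_cases i <;> simp_all)
      refine ⟨_, cube_neg_div_eq_one h0 ?_, .inl (mk_eq_sideZ hv h0 h2)⟩
      simpa [h2] using hsum
  · rintro ⟨c, hc, rfl | rfl | rfl⟩ <;>
      simp [sideZ, sideY, sideX, isFlex_mk] <;> linear_combination -hc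

def cubeRootRatios (a b : ℂ) : Set ℂ := {c | c ^ 3 = 1 ∧ a = c * b}

theorem ne_zero_of_mem_cubeRootRatios {a b c : ℂ} (hc : c ∈ cubeRootRatios a b) : c ≠ 0 := by
  rintro rfl
  simp [cubeRootRatios] at hc

theorem setOf_isFlex_onLine (l : Fin 3 → ℂ) :
    {R : P2 | IsFlex R ∧ OnLine R l} =
      sideZ '' cubeRootRatios (l 0) (l 1) ∪ sideY '' cubeRootRatios (l 0) (l 2) ∪
        sideX '' cubeRootRatios (l 1) (l 2) := by
  ext R
  simp only [Set.mem_ofPred_eq, isFlex_iff, Set.mem_union, Set.mem_image, cubeRootRatios]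
  constructor
  · rintro ⟨⟨c, hc, rfl | rfl | rfl⟩, hl⟩
    · exact .inl (.inl ⟨c, ⟨hc, (onLine_sideZ c l).1 hl⟩, rfl⟩)
    · exact .inl (.inr ⟨c, ⟨hc, (onLine_sideY c l).1 hl⟩, rfl⟩)
    · exact .inr ⟨c, ⟨hc, (onLine_sideX c l).1 hl⟩, rfl⟩
  · rintro ((⟨c, ⟨hc, hl⟩, rfl⟩ | ⟨c, ⟨hc, hl⟩, rfl⟩) | ⟨c, ⟨hc, hl⟩, rfl⟩)
    · exact ⟨⟨c, hc, .inl rfl⟩, (onLine_sideZ c l).2 hl⟩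
    · exact ⟨⟨c, hc, .inr (.inl rfl)⟩, (onLine_sideY c l).2 hl⟩
    · exact ⟨⟨c, hc, .inr (.inr rfl)⟩, (onLine_sideX c l).2 hl⟩

theorem setOf_cube_eq_one : {c : ℂ | c ^ 3 = 1} = ↑(Polynomial.nthRootsFinset 3 (1 : ℂ)) := by
  ext; simp

theorem ncard_setOf_cube_eq_one : {c : ℂ | c ^ 3 = 1}.ncard = 3 := by
  rw [setOf_cube_eq_one, Set.ncard_coe_finset,
    (Complex.isPrimitiveRoot_exp 3 (by norm_num)).card_nthRootsFinset]

instance (a b : ℂ) : Finite (cubeRootRatios a b) :=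
  Set.Finite.to_subtype <| (setOf_cube_eq_one ▸ Finset.finite_toSet _).subset fun _ hc => hc.1

theorem finite_setOf_isFlex_onLine (l : Fin 3 → ℂ) :
    {R : P2 | IsFlex R ∧ OnLine R l}.Finite := by
  rw [setOf_isFlex_onLine]
  exact Set.toFinite _

theorem ncard_cubeRootRatios (a b : ℂ) :
    (cubeRootRatios a b).ncard = if a = 0 ∧ b = 0 then 3 else if a ^ 3 = b ^ 3 then 1 else 0 := by
  rcases eq_or_ne b 0 with rfl | hb
  · by_cases ha : a = 0 <;> simp [cubeRootRatios, ha, ncard_setOf_cube_eq_one]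
  · have hroots : cubeRootRatios a b = {c | c = a / b ∧ a ^ 3 = b ^ 3} := by
      ext c
      rw [cubeRootRatios, Set.mem_ofPred_eq, Set.mem_ofPred_eq, eq_comm (a := a), ← eq_div_iff hb]
      constructor
      · rintro ⟨hc, rfl⟩
        exact ⟨rfl, by rwa [div_pow, div_eq_one_iff_eq (pow_ne_zero 3 hb)] at hc⟩
      · rintro ⟨rfl, h⟩
        exact ⟨by rw [div_pow, h, div_self (pow_ne_zero 3 hb)], rfl⟩
    split_ifs with h₀ h <;> simp_all

theorem ncard_cubeRootRatios_add_eq_three {x y z : ℂ} (hxyz : ¬(x = 0 ∧ y = 0 ∧ z = 0))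
    (h : 2 ≤ (cubeRootRatios x y).ncard + (cubeRootRatios x z).ncard +
      (cubeRootRatios y z).ncard) :
    (cubeRootRatios x y).ncard + (cubeRootRatios x z).ncard + (cubeRootRatios y z).ncard = 3 := by
  simp only [ncard_cubeRootRatios] at h ⊢
  split_ifs at h ⊢ <;> grind

theorem ncard_setOf_isFlex_onLine (l : Fin 3 → ℂ) :
    {R : P2 | IsFlex R ∧ OnLine R l}.ncard =
      (cubeRootRatios (l 0) (l 1)).ncard + (cubeRootRatios (l 0) (l 2)).ncard +
        (cubeRootRatios (l 1) (l 2)).ncard := by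
  have hZY :
      Disjoint (sideZ '' cubeRootRatios (l 0) (l 1)) (sideY '' cubeRootRatios (l 0) (l 2)) :=
    Set.disjoint_left.2 fun _ ⟨_, _, hc⟩ ⟨_, hd, hd'⟩ =>
      sideZ_ne_sideY (ne_zero_of_mem_cubeRootRatios hd) (hc.trans hd'.symm)
  have hX : Disjoint (sideZ '' cubeRootRatios (l 0) (l 1) ∪ sideY '' cubeRootRatios (l 0) (l 2))
      (sideX '' cubeRootRatios (l 1) (l 2)) := by
    refine Set.disjoint_union_left.2 ⟨?_, ?_⟩ <;>
      refine Set.disjoint_left.2 fun _ ⟨_, _, hc⟩ ⟨_, _, hd⟩ => ?_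
    exacts [sideZ_ne_sideX (hc.trans hd.symm), sideY_ne_sideX (hc.trans hd.symm)]
  rw [setOf_isFlex_onLine, Set.ncard_union_eq hX, Set.ncard_union_eq hZY,
    Set.ncard_image_of_injective _ sideZ_injective, Set.ncard_image_of_injective _ sideY_injective,
    Set.ncard_image_of_injective _ sideX_injective]

end FermatCubic

open FermatCubic

/-- Every line through two distinct inflection points of the Fermat cubic contains
exactly three inflection points. -/
theorem line_through_two_flexes (P Q : P2) (hP : IsFlex P) (hQ : IsFlex Q) (hPQ : P ≠ Q)
    (l : Fin 3 → ℂ) (hl : l ≠ 0) (hlP : OnLine P l) (hlQ : OnLine Q l) :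
    {R : P2 | IsFlex R ∧ OnLine R l}.ncard = 3 := by
  have htwo : 2 ≤ {R : P2 | IsFlex R ∧ OnLine R l}.ncard := by
    rw [← Set.ncard_pair hPQ]
    exact Set.ncard_le_ncard (Set.pair_subset ⟨hP, hlP⟩ ⟨hQ, hlQ⟩) (finite_setOf_isFlex_onLine l)
  have hcoord : ¬(l 0 = 0 ∧ l 1 = 0 ∧ l 2 = 0) := fun ⟨h0, h1, h2⟩ =>
    hl (funext fun i => by fin_cases i <;> assumption)
  rw [ncard_setOf_isFlex_onLine] at htwo ⊢
  exact ncard_cubeRootRatios_add_eq_three hcoord htwo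
end
end

section
/- There are exactly 12 lines in ℙ²(ℂ) each containing at least 3 (equivalently, exactly 3) of the 9 inflection points of the Fermat cubic, and each inflection point lies on exactly 4 of these lines (so they form a (12₃, 9₄) configuration). -/
noncomputable section

/-- The point `P` lies on the line `L` (a point of the dual plane). -/
def OnL (P L : P2) : Prop :=
  L.rep 0 * P.rep 0 + L.rep 1 * P.rep 1 + L.rep 2 * P.rep 2 = 0

/-- The lines containing at least 3 inflection points of the Fermat cubic. -/
def HesseLines : Set P2 := {L | 3 ≤ {P : P2 | IsFlex P ∧ OnL P L}.ncard}

/-!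
Every flex has a vanishing coordinate, so the nine flexes are `flexZ a = (1 : -ε^a : 0)`,
`flexY b = (1 : 0 : -ε^b)` and `flexX c = (0 : 1 : -ε^c)`, three on each coordinate line.
The nine lines `transversal b c : ε^b x + ε^c y + z = 0` each pass through `flexZ (b - c)`,
`flexY b` and `flexX c`. Every pair of flexes lies on one of these twelve lines, and two distinct
points span a unique line, so no other line contains even two flexes. All the counts are then
read off the incidence table of flexes and the twelve lines.
-/

theorem Projectivization.eq_cross_of_orthogonal {F : Type*} [Field F] [DecidableEq F]
    {u v w : Projectivization F (Fin 3 → F)} (hvw : v ≠ w) (hv : u.orthogonal v)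
    (hw : u.orthogonal w) : u = cross v w := by
  induction u with | h u hu =>
  induction v with | h v hv0 =>
  induction w with | h w hw0 =>
  rw [orthogonal_mk] at hv hw
  rw [cross_mk_of_ne hv0 hw0 hvw, mk_eq_mk_iff_crossProduct_eq_zero,
    cross_cross_eq_smul_sub_smul', hw, dotProduct_comm, hv, zero_smul, zero_smul, sub_zero]

namespace Hesse

open Projectivization

lemma onL_iff_orthogonal {P L : P2} : OnL P L ↔ L.orthogonal P := by
  conv_rhs => rw [← mk_rep L, ← mk_rep P]
  rw [orthogonal_mk, Matrix.vec3_dotProduct, OnL]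

theorem eq_of_onL_of_onL {P Q L L' : P2} (hPQ : P ≠ Q) (hPL : OnL P L) (hQL : OnL Q L)
    (hPL' : OnL P L') (hQL' : OnL Q L') : L = L' := by
  rw [onL_iff_orthogonal] at hPL hQL hPL' hQL'
  rw [eq_cross_of_orthogonal hPQ hPL hQL, eq_cross_of_orthogonal hPQ hPL' hQL']

lemma onL_mk {v l : Fin 3 → ℂ} (hv : v ≠ 0) (hl : l ≠ 0) :
    OnL (mk ℂ v hv) (mk ℂ l hl) ↔ l 0 * v 0 + l 1 * v 1 + l 2 * v 2 = 0 := by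
  rw [onL_iff_orthogonal, orthogonal_mk, Matrix.vec3_dotProduct]

lemma isFlex_mk {v : Fin 3 → ℂ} (hv : v ≠ 0) :
    IsFlex (mk ℂ v hv) ↔ v 0 ^ 3 + v 1 ^ 3 + v 2 ^ 3 = 0 ∧ v 0 * v 1 * v 2 = 0 := by
  obtain ⟨t, ht⟩ := exists_smul_eq_mk_rep ℂ v hv
  have ht3 : (t : ℂ) ^ 3 ≠ 0 := pow_ne_zero _ t.ne_zero
  simp only [IsFlex, ← ht, Units.smul_def, Pi.smul_apply, smul_eq_mul]
  rw [show (t * v 0) ^ 3 + (t * v 1) ^ 3 + (t * v 2) ^ 3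
      = (t : ℂ) ^ 3 * (v 0 ^ 3 + v 1 ^ 3 + v 2 ^ 3) by ring,
    show t * v 0 * (t * v 1) * (t * v 2) = (t : ℂ) ^ 3 * (v 0 * v 1 * v 2) by ring,
    mul_eq_zero, mul_eq_zero, or_iff_right ht3, or_iff_right ht3]

def ε : ℂ := Complex.exp (2 * Real.pi * Complex.I / 3)

lemma isPrimitiveRoot_ε : IsPrimitiveRoot ε 3 := by
  simpa [ε] using Complex.isPrimitiveRoot_exp 3 (by norm_num)

def epow (a : Fin 3) : ℂ := ε ^ (a : ℕ)

lemma epow_add (a b : Fin 3) : epow (a + b) = epow a * epow b := by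
  rw [epow, Fin.val_add, ← pow_eq_pow_mod _ isPrimitiveRoot_ε.pow_eq_one, pow_add, epow, epow]

lemma epow_injective : Function.Injective epow :=
  fun a b h => Fin.ext (isPrimitiveRoot_ε.pow_inj a.isLt b.isLt h)

lemma epow_ne_zero (a : Fin 3) : epow a ≠ 0 :=
  pow_ne_zero _ (isPrimitiveRoot_ε.ne_zero (by norm_num))

lemma epow_pow_three (a : Fin 3) : epow a ^ 3 = 1 := by
  rw [epow, ← pow_mul, mul_comm, pow_mul, isPrimitiveRoot_ε.pow_eq_one, one_pow]

lemma exists_eq_neg_epow_mul_of_cube_add_cube {x y : ℂ} (hxy : x ≠ 0 ∨ y ≠ 0)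
    (h : x ^ 3 + y ^ 3 = 0) : ∃ a, y = -epow a * x := by
  have hx : x ≠ 0 := by
    rintro rfl
    simp_all
  have hroot : (-y / x) ^ 3 = 1 := by
    rw [div_pow, div_eq_one_iff_eq (pow_ne_zero 3 hx)]
    linear_combination -h
  obtain ⟨i, hi, hεi⟩ := isPrimitiveRoot_ε.eq_pow_of_pow_eq_one hroot
  refine ⟨⟨i, hi⟩, ?_⟩
  rw [epow, Fin.val_mk, hεi]
  field_simp

def flexZ (a : Fin 3) : P2 := mk ℂ ![1, -epow a, 0] (by simp)
def flexY (b : Fin 3) : P2 := mk ℂ ![1, 0, -epow b] (by simp)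
def flexX (c : Fin 3) : P2 := mk ℂ ![0, 1, -epow c] (by simp)

def lineZ : P2 := mk ℂ ![0, 0, 1] (by simp)
def lineY : P2 := mk ℂ ![0, 1, 0] (by simp)
def lineX : P2 := mk ℂ ![1, 0, 0] (by simp)
def transversal (b c : Fin 3) : P2 := mk ℂ ![epow b, epow c, 1] (by simp)

@[simp] lemma onL_flexZ_lineZ (a : Fin 3) : OnL (flexZ a) lineZ := by
  simp [flexZ, lineZ, onL_mk]

@[simp] lemma not_onL_flexZ_lineY (a : Fin 3) : ¬ OnL (flexZ a) lineY := by
  simp [flexZ, lineY, onL_mk, epow_ne_zero]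

@[simp] lemma not_onL_flexZ_lineX (a : Fin 3) : ¬ OnL (flexZ a) lineX := by
  simp [flexZ, lineX, onL_mk]

@[simp] lemma onL_flexZ_transversal (a b c : Fin 3) :
    OnL (flexZ a) (transversal b c) ↔ b = a + c := by
  rw [← epow_injective.eq_iff, epow_add, ← sub_eq_zero]
  simp [flexZ, transversal, onL_mk]
  constructor <;> intro h <;> linear_combination h

@[simp] lemma not_onL_flexY_lineZ (b : Fin 3) : ¬ OnL (flexY b) lineZ := by
  simp [flexY, lineZ, onL_mk, epow_ne_zero]

@[simp] lemma onL_flexY_lineY (b : Fin 3) : OnL (flexY b) lineY := by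
  simp [flexY, lineY, onL_mk]

@[simp] lemma not_onL_flexY_lineX (b : Fin 3) : ¬ OnL (flexY b) lineX := by
  simp [flexY, lineX, onL_mk]

@[simp] lemma onL_flexY_transversal (b' b c : Fin 3) :
    OnL (flexY b') (transversal b c) ↔ b = b' := by
  rw [← epow_injective.eq_iff, ← sub_eq_zero]
  simp [flexY, transversal, onL_mk, sub_eq_add_neg]

@[simp] lemma not_onL_flexX_lineZ (c : Fin 3) : ¬ OnL (flexX c) lineZ := by
  simp [flexX, lineZ, onL_mk, epow_ne_zero]

@[simp] lemma not_onL_flexX_lineY (c : Fin 3) : ¬ OnL (flexX c) lineY := by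
  simp [flexX, lineY, onL_mk]

@[simp] lemma onL_flexX_lineX (c : Fin 3) : OnL (flexX c) lineX := by
  simp [flexX, lineX, onL_mk]

@[simp] lemma onL_flexX_transversal (c' b c : Fin 3) :
    OnL (flexX c') (transversal b c) ↔ c = c' := by
  rw [← epow_injective.eq_iff, ← sub_eq_zero]
  simp [flexX, transversal, onL_mk, sub_eq_add_neg]

lemma isFlex_flexZ (a : Fin 3) : IsFlex (flexZ a) := by
  simp [flexZ, isFlex_mk, Odd.neg_pow (by decide : Odd 3), epow_pow_three]

lemma isFlex_flexY (b : Fin 3) : IsFlex (flexY b) := by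
  simp [flexY, isFlex_mk, Odd.neg_pow (by decide : Odd 3), epow_pow_three]

lemma isFlex_flexX (c : Fin 3) : IsFlex (flexX c) := by
  simp [flexX, isFlex_mk, Odd.neg_pow (by decide : Odd 3), epow_pow_three]

lemma isFlex_iff {P : P2} : IsFlex P ↔ ∃ a, P = flexZ a ∨ P = flexY a ∨ P = flexX a := by
  refine ⟨fun hP => ?_, ?_⟩
  · induction P using Projectivization.ind with | h v hv =>
    obtain ⟨hcube, hprod⟩ := (isFlex_mk hv).1 hP
    have hv_coord : v 0 ≠ 0 ∨ v 1 ≠ 0 ∨ v 2 ≠ 0 := by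
      by_contra! h
      exact hv (by ext i; fin_cases i <;> simp [h])
    rcases mul_eq_zero.1 hprod with h01 | h2
    · rcases mul_eq_zero.1 h01 with h0 | h1
      · obtain ⟨c, hc⟩ := exists_eq_neg_epow_mul_of_cube_add_cube (by simpa [h0] using hv_coord)
          (by linear_combination hcube - v 0 ^ 2 * h0)
        refine ⟨c, .inr (.inr ((mk_eq_mk_iff' ..).2 ⟨v 1, ?_⟩))⟩
        ext i; fin_cases i <;> simp [h0, hc, mul_comm]
      · obtain ⟨b, hb⟩ := exists_eq_neg_epow_mul_of_cube_add_cube (by simpa [h1] using hv_coord)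
          (by linear_combination hcube - v 1 ^ 2 * h1)
        refine ⟨b, .inr (.inl ((mk_eq_mk_iff' ..).2 ⟨v 0, ?_⟩))⟩
        ext i; fin_cases i <;> simp [h1, hb, mul_comm]
    · obtain ⟨a, ha⟩ := exists_eq_neg_epow_mul_of_cube_add_cube (by simpa [h2] using hv_coord)
        (by linear_combination hcube - v 2 ^ 2 * h2)
      refine ⟨a, .inl ((mk_eq_mk_iff' ..).2 ⟨v 0, ?_⟩)⟩
      ext i; fin_cases i <;> simp [h2, ha, mul_comm]
  · rintro ⟨a, rfl | rfl | rfl⟩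
    exacts [isFlex_flexZ a, isFlex_flexY a, isFlex_flexX a]

lemma flexZ_injective : Function.Injective flexZ := fun a a' h => by
  simpa using (onL_flexZ_transversal a' a 0).1
    (h ▸ (onL_flexZ_transversal a a 0).2 (add_zero a).symm)

lemma flexY_injective : Function.Injective flexY := fun b b' h => by
  simpa using (onL_flexY_transversal b' b 0).1 (h ▸ (onL_flexY_transversal b b 0).2 rfl)

lemma flexX_injective : Function.Injective flexX := fun c c' h => by
  simpa using (onL_flexX_transversal c' 0 c).1 (h ▸ (onL_flexX_transversal c 0 c).2 rfl)

@[simp] lemma transversal_inj {b c b' c' : Fin 3} :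
    transversal b c = transversal b' c' ↔ b = b' ∧ c = c' := by
  refine ⟨fun h => ⟨?_, ?_⟩, fun ⟨hb, hc⟩ => hb ▸ hc ▸ rfl⟩
  · exact ((onL_flexY_transversal b b' c').1 (h ▸ (onL_flexY_transversal b b c).2 rfl)).symm
  · exact ((onL_flexX_transversal c b' c').1 (h ▸ (onL_flexX_transversal c b c).2 rfl)).symm

lemma transversal_injective : Function.Injective (Function.uncurry transversal) :=
  fun _ _ h => Prod.ext_iff.2 (transversal_inj.1 h)

@[simp] lemma flexZ_ne_flexY (a b : Fin 3) : flexZ a ≠ flexY b :=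
  fun h => not_onL_flexY_lineZ b (h ▸ onL_flexZ_lineZ a)

@[simp] lemma flexZ_ne_flexX (a c : Fin 3) : flexZ a ≠ flexX c :=
  fun h => not_onL_flexX_lineZ c (h ▸ onL_flexZ_lineZ a)

@[simp] lemma flexY_ne_flexX (b c : Fin 3) : flexY b ≠ flexX c :=
  fun h => not_onL_flexX_lineY c (h ▸ onL_flexY_lineY b)

@[simp] lemma lineZ_ne_lineY : lineZ ≠ lineY :=
  fun h => not_onL_flexZ_lineY 0 (h ▸ onL_flexZ_lineZ 0)

@[simp] lemma lineZ_ne_lineX : lineZ ≠ lineX :=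
  fun h => not_onL_flexZ_lineX 0 (h ▸ onL_flexZ_lineZ 0)

@[simp] lemma lineY_ne_lineX : lineY ≠ lineX :=
  fun h => not_onL_flexY_lineX 0 (h ▸ onL_flexY_lineY 0)

@[simp] lemma transversal_ne_lineZ (b c : Fin 3) : transversal b c ≠ lineZ :=
  fun h => not_onL_flexY_lineZ b (h ▸ (onL_flexY_transversal b b c).2 rfl)

@[simp] lemma transversal_ne_lineY (b c : Fin 3) : transversal b c ≠ lineY :=
  fun h => not_onL_flexX_lineY c (h ▸ (onL_flexX_transversal c b c).2 rfl)

@[simp] lemma transversal_ne_lineX (b c : Fin 3) : transversal b c ≠ lineX :=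
  fun h => not_onL_flexY_lineX b (h ▸ (onL_flexY_transversal b b c).2 rfl)

def twelveLines : Set P2 :=
  insert lineZ (insert lineY (insert lineX (Set.range (Function.uncurry transversal))))

lemma transversal_mem_twelveLines (b c : Fin 3) : transversal b c ∈ twelveLines := by
  simp [twelveLines]

lemma ncard_twelveLines : twelveLines.ncard = 12 := by
  rw [twelveLines, Set.ncard_insert_of_notMem (by simp), Set.ncard_insert_of_notMem (by simp),
    Set.ncard_insert_of_notMem (by simp), Set.ncard_range_of_injective transversal_injective]
  simp

lemma exists_mem_twelveLines_onL {P Q : P2} (hP : IsFlex P) (hQ : IsFlex Q) :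
    ∃ L ∈ twelveLines, OnL P L ∧ OnL Q L := by
  obtain ⟨a, rfl | rfl | rfl⟩ := isFlex_iff.1 hP <;>
    obtain ⟨a', rfl | rfl | rfl⟩ := isFlex_iff.1 hQ
  · exact ⟨lineZ, by simp [twelveLines], by simp, by simp⟩
  · exact ⟨transversal a' (a' - a), transversal_mem_twelveLines _ _, by simp, by simp⟩
  · exact ⟨transversal (a + a') a', transversal_mem_twelveLines _ _, by simp, by simp⟩
  · exact ⟨transversal a (a - a'), transversal_mem_twelveLines _ _, by simp, by simp⟩
  · exact ⟨lineY, by simp [twelveLines], by simp, by simp⟩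
  · exact ⟨transversal a a', transversal_mem_twelveLines _ _, by simp, by simp⟩
  · exact ⟨transversal (a' + a) a, transversal_mem_twelveLines _ _, by simp, by simp⟩
  · exact ⟨transversal a' a, transversal_mem_twelveLines _ _, by simp, by simp⟩
  · exact ⟨lineX, by simp [twelveLines], by simp, by simp⟩

lemma flexes_onL_lineZ : {P : P2 | IsFlex P ∧ OnL P lineZ} = Set.range flexZ := by
  ext P
  refine ⟨fun ⟨hP, hPL⟩ => ?_,
    fun ⟨a, ha⟩ => ha ▸ ⟨isFlex_flexZ a, onL_flexZ_lineZ a⟩⟩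
  obtain ⟨a, rfl | rfl | rfl⟩ := isFlex_iff.1 hP <;> simp_all

lemma flexes_onL_lineY : {P : P2 | IsFlex P ∧ OnL P lineY} = Set.range flexY := by
  ext P
  refine ⟨fun ⟨hP, hPL⟩ => ?_,
    fun ⟨a, ha⟩ => ha ▸ ⟨isFlex_flexY a, onL_flexY_lineY a⟩⟩
  obtain ⟨a, rfl | rfl | rfl⟩ := isFlex_iff.1 hP <;> simp_all

lemma flexes_onL_lineX : {P : P2 | IsFlex P ∧ OnL P lineX} = Set.range flexX := by
  ext P
  refine ⟨fun ⟨hP, hPL⟩ => ?_,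
    fun ⟨a, ha⟩ => ha ▸ ⟨isFlex_flexX a, onL_flexX_lineX a⟩⟩
  obtain ⟨a, rfl | rfl | rfl⟩ := isFlex_iff.1 hP <;> simp_all

lemma flexes_onL_transversal (b c : Fin 3) :
    {P : P2 | IsFlex P ∧ OnL P (transversal b c)} = {flexZ (b - c), flexY b, flexX c} := by
  ext P
  constructor
  · rintro ⟨hP, hPL⟩
    obtain ⟨a, rfl | rfl | rfl⟩ := isFlex_iff.1 hP <;> simp_all
  · rintro (rfl | rfl | rfl)
    exacts [⟨isFlex_flexZ _, by simp⟩, ⟨isFlex_flexY _, by simp⟩,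
      ⟨isFlex_flexX _, by simp⟩]

lemma ncard_flexes_onL_of_mem_twelveLines {L : P2} (hL : L ∈ twelveLines) :
    {P : P2 | IsFlex P ∧ OnL P L}.ncard = 3 := by
  rcases hL with rfl | rfl | rfl | ⟨⟨b, c⟩, rfl⟩
  · simp [flexes_onL_lineZ, Set.ncard_range_of_injective flexZ_injective]
  · simp [flexes_onL_lineY, Set.ncard_range_of_injective flexY_injective]
  · simp [flexes_onL_lineX, Set.ncard_range_of_injective flexX_injective]
  · rw [Function.uncurry_apply_pair, flexes_onL_transversal]
    exact Set.ncard_eq_three.2 ⟨_, _, _, by simp, by simp, by simp, rfl⟩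

lemma hesseLines_eq_twelveLines : HesseLines = twelveLines := by
  refine Set.Subset.antisymm (fun L hL => ?_) fun L hL => ?_
  · have h3 : 3 ≤ {P : P2 | IsFlex P ∧ OnL P L}.ncard := hL
    have hfin : {P : P2 | IsFlex P ∧ OnL P L}.Finite := Set.finite_of_ncard_pos (by omega)
    obtain ⟨P, Q, ⟨hP, hPL⟩, ⟨hQ, hQL⟩, hPQ⟩ := (Set.one_lt_ncard_iff hfin).1 (by omega)
    obtain ⟨T, hT, hPT, hQT⟩ := exists_mem_twelveLines_onL hP hQ
    rwa [eq_of_onL_of_onL hPQ hPL hQL hPT hQT]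
  · exact (ncard_flexes_onL_of_mem_twelveLines hL).ge

lemma twelveLines_through_flexZ (a : Fin 3) :
    {L : P2 | L ∈ twelveLines ∧ OnL (flexZ a) L} =
      insert lineZ (Set.range fun c => transversal (a + c) c) := by
  ext L
  constructor
  · rintro ⟨rfl | rfl | rfl | ⟨⟨b, c⟩, rfl⟩, hL⟩ <;> simp_all
  · rintro (rfl | ⟨c, rfl⟩)
    exacts [⟨by simp [twelveLines], by simp⟩, ⟨transversal_mem_twelveLines _ _, by simp⟩]

lemma twelveLines_through_flexY (b : Fin 3) :
    {L : P2 | L ∈ twelveLines ∧ OnL (flexY b) L} =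
      insert lineY (Set.range (transversal b)) := by
  ext L
  constructor
  · rintro ⟨rfl | rfl | rfl | ⟨⟨b, c⟩, rfl⟩, hL⟩ <;> simp_all
  · rintro (rfl | ⟨c, rfl⟩)
    exacts [⟨by simp [twelveLines], by simp⟩, ⟨transversal_mem_twelveLines _ _, by simp⟩]

lemma twelveLines_through_flexX (c : Fin 3) :
    {L : P2 | L ∈ twelveLines ∧ OnL (flexX c) L} =
      insert lineX (Set.range fun b => transversal b c) := by
  ext L
  constructor
  · rintro ⟨rfl | rfl | rfl | ⟨⟨b, c⟩, rfl⟩, hL⟩ <;> simp_all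
  · rintro (rfl | ⟨b, rfl⟩)
    exacts [⟨by simp [twelveLines], by simp⟩, ⟨transversal_mem_twelveLines _ _, by simp⟩]

lemma ncard_twelveLines_through_flex {P : P2} (hP : IsFlex P) :
    {L : P2 | L ∈ twelveLines ∧ OnL P L}.ncard = 4 := by
  obtain ⟨a, rfl | rfl | rfl⟩ := isFlex_iff.1 hP
  · rw [twelveLines_through_flexZ, Set.ncard_insert_of_notMem (by simp),
      Set.ncard_range_of_injective fun c c' h => (transversal_inj.1 h).2]
    simp
  · rw [twelveLines_through_flexY, Set.ncard_insert_of_notMem (by simp),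
      Set.ncard_range_of_injective fun c c' h => (transversal_inj.1 h).2]
    simp
  · rw [twelveLines_through_flexX, Set.ncard_insert_of_notMem (by simp),
      Set.ncard_range_of_injective fun b b' h => (transversal_inj.1 h).1]
    simp

end Hesse

/-- The Hesse `(12₃, 9₄)` configuration: there are exactly 12 lines containing at least
(equivalently exactly) 3 of the 9 inflection points of the Fermat cubic, and each
inflection point lies on exactly 4 of them. -/
theorem hesse_configuration :
    HesseLines.ncard = 12 ∧
    (∀ L ∈ HesseLines, {P : P2 | IsFlex P ∧ OnL P L}.ncard = 3) ∧
    (∀ P : P2, IsFlex P → {L : P2 | L ∈ HesseLines ∧ OnL P L}.ncard = 4) := by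
  rw [Hesse.hesseLines_eq_twelveLines]
  exact ⟨Hesse.ncard_twelveLines, fun _ => Hesse.ncard_flexes_onL_of_mem_twelveLines,
    fun _ => Hesse.ncard_twelveLines_through_flex⟩
end
end

section
/- The common zero locus in ℙ²(ℂ) of the Fermat cubic x^3+y^3+z^3 and (x^3-y^3)(y^3-z^3)(z^3-x^3) consists of exactly 27 points. -/
noncomputable section

/-! No sextactic point lies on the line `x = 0`, so each one is `[1 : y : z]` with
`1 + y³ + z³ = 0` and `(1 - y³)(y³ - z³)(z³ - 1) = 0`. These force `(y³, z³)` to be one of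
`(1, -2)`, `(-1/2, -1/2)`, `(-2, 1)`, and each of these values is taken by exactly `3 · 3`
pairs `(y, z)`. -/

open Set

theorem Set.ncard_preimage_of_ncard_fiber_eq {α β : Type*} (f : α → β) (t : Finset β) {n : ℕ}
    (hfin : ∀ b ∈ t, (f ⁻¹' {b}).Finite) (hcard : ∀ b ∈ t, (f ⁻¹' {b}).ncard = n) :
    (f ⁻¹' t).ncard = t.card * n := by
  rw [← biUnion_preimage_singleton, (Finset.finite_toSet t).ncard_biUnion hfin
    ((t : Set β).pairwiseDisjoint_fiber f), finsum_mem_congr rfl hcard, finsum_mem_coe_finset,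
    Finset.sum_const, smul_eq_mul]

theorem IsPrimitiveRoot.ncard_setOf_pow_eq {K : Type*} [Field K] [IsAlgClosed K] {ζ : K} {n : ℕ}
    (hζ : IsPrimitiveRoot ζ n) (hn : 0 < n) {a : K} (ha : a ≠ 0) :
    {x : K | x ^ n = a}.ncard = n := by
  classical
  have hroots : {x : K | x ^ n = a} = (Polynomial.nthRootsFinset n a : Set K) := by
    ext x
    simp [Polynomial.mem_nthRootsFinset hn]
  rw [hroots, ncard_coe_finset, Polynomial.nthRootsFinset_def,
    Multiset.toFinset_card_of_nodup (hζ.nthRoots_nodup ha), hζ.card_nthRoots,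
    if_pos (IsAlgClosed.exists_pow_nat_eq a hn)]

theorem ncard_preimage_prodMap_pow_singleton {K : Type*} [Field K] [IsAlgClosed K] {ζ : K} {n : ℕ}
    (hζ : IsPrimitiveRoot ζ n) (hn : 0 < n) {a b : K} (ha : a ≠ 0) (hb : b ≠ 0) :
    (Prod.map (· ^ n) (· ^ n) ⁻¹' {(a, b)} : Set (K × K)).ncard = n * n := by
  rw [← singleton_prod_singleton, preimage_prod_map_prod, ncard_prod]
  exact congrArg₂ (· * ·) (hζ.ncard_setOf_pow_eq hn ha) (hζ.ncard_setOf_pow_eq hn hb)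

theorem fermat_hessian_affine_iff {K : Type*} [Field K] (h2 : (2 : K) ≠ 0) (a b : K) :
    1 + a + b = 0 ∧ (1 - a) * (a - b) * (b - 1) = 0 ↔
      (a, b) = (1, -2) ∨ (a, b) = (-1 / 2, -1 / 2) ∨ (a, b) = (-2, 1) := by
  simp only [Prod.ext_iff]
  constructor
  · rintro ⟨hsum, hprod⟩
    obtain rfl : b = -1 - a := by linear_combination hsum
    rcases mul_eq_zero.1 hprod with h | h
    · rcases mul_eq_zero.1 h with h | h
      · obtain rfl : a = 1 := by linear_combination -h
        norm_num
      · obtain rfl : a = -1 / 2 := by field_simp; linear_combination h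
        refine .inr (.inl ⟨rfl, ?_⟩)
        field_simp
        ring
    · obtain rfl : a = -2 := by linear_combination -h
      norm_num
  · rintro (⟨rfl, rfl⟩ | ⟨rfl, rfl⟩ | ⟨rfl, rfl⟩) <;> constructor <;> field_simp <;> ring

namespace Fermat

open Projectivization

def IsSextactic (v : Fin 3 → ℂ) : Prop :=
  v 0 ^ 3 + v 1 ^ 3 + v 2 ^ 3 = 0 ∧
    (v 0 ^ 3 - v 1 ^ 3) * (v 1 ^ 3 - v 2 ^ 3) * (v 2 ^ 3 - v 0 ^ 3) = 0

theorem isSextactic_smul_iff {c : ℂ} (hc : c ≠ 0) (v : Fin 3 → ℂ) :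
    IsSextactic (c • v) ↔ IsSextactic v := by
  have hc3 : c ^ 3 ≠ 0 := pow_ne_zero 3 hc
  have hsum : (c * v 0) ^ 3 + (c * v 1) ^ 3 + (c * v 2) ^ 3 =
      c ^ 3 * (v 0 ^ 3 + v 1 ^ 3 + v 2 ^ 3) := by ring
  have hprod : ((c * v 0) ^ 3 - (c * v 1) ^ 3) * ((c * v 1) ^ 3 - (c * v 2) ^ 3) *
      ((c * v 2) ^ 3 - (c * v 0) ^ 3) = (c ^ 3) ^ 3 *
        ((v 0 ^ 3 - v 1 ^ 3) * (v 1 ^ 3 - v 2 ^ 3) * (v 2 ^ 3 - v 0 ^ 3)) := by ring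
  simp only [IsSextactic, Pi.smul_apply, smul_eq_mul, hsum, hprod, mul_eq_zero, hc3,
    pow_eq_zero_iff, false_or, ne_eq, OfNat.ofNat_ne_zero, not_false_eq_true]

theorem isSextactic_rep_mk_iff (v : Fin 3 → ℂ) (hv : v ≠ 0) :
    IsSextactic (mk ℂ v hv).rep ↔ IsSextactic v := by
  obtain ⟨u, hu⟩ := exists_smul_eq_mk_rep ℂ v hv
  rw [← hu, Units.smul_def, isSextactic_smul_iff u.ne_zero]

theorem IsSextactic.apply_zero_ne_zero {v : Fin 3 → ℂ} (hv : IsSextactic v) (hne : v ≠ 0) :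
    v 0 ≠ 0 := by
  intro h0
  obtain ⟨hsum, hprod⟩ := hv
  rw [h0] at hsum hprod
  -- with `x = 0`, the Hessian is `2 y⁹` modulo `y³ + z³`
  have hy : v 1 = 0 := pow_eq_zero_iff (n := 9) (by norm_num) |>.1 <| by
    linear_combination (hprod + v 1 ^ 3 * (2 * v 1 ^ 3 - v 2 ^ 3) * hsum) / 2
  have hz : v 2 = 0 := pow_eq_zero_iff (n := 3) (by norm_num) |>.1 <| by
    linear_combination hsum - v 1 ^ 2 * hy
  exact hne <| funext fun i => by fin_cases i <;> assumption

def affineChart (p : ℂ × ℂ) : P2 :=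
  mk ℂ ![1, p.1, p.2] fun h => one_ne_zero (congrFun h 0)

theorem affineChart_injective : Function.Injective affineChart := by
  rintro ⟨y, z⟩ ⟨y', z'⟩ h
  obtain ⟨a, ha⟩ := (mk_eq_mk_iff' ℂ _ _ _ _).1 h
  have h0 := congrFun ha 0
  have h1 := congrFun ha 1
  have h2 := congrFun ha 2
  simp only [Matrix.cons_val_zero, Matrix.cons_val_one, Matrix.cons_val_two, Matrix.head_cons,
    Matrix.tail_cons, Pi.smul_apply, smul_eq_mul, mul_one] at h0 h1 h2
  subst h0
  simp_all

theorem mk_eq_affineChart (v : Fin 3 → ℂ) (hv : v ≠ 0) (h0 : v 0 ≠ 0) :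
    mk ℂ v hv = affineChart (v 1 / v 0, v 2 / v 0) := by
  refine (mk_eq_mk_iff' ℂ _ _ _ _).2 ⟨v 0, ?_⟩
  ext i
  fin_cases i <;> simp [field]

theorem setOf_isSextactic_rep :
    {P : P2 | IsSextactic P.rep} = affineChart '' {p | IsSextactic ![1, p.1, p.2]} := by
  have hsub : {P : P2 | IsSextactic P.rep} ⊆ range affineChart := by
    intro P hP
    rw [← mk_rep P, mk_eq_affineChart _ _ (hP.apply_zero_ne_zero P.rep_nonzero)]
    exact mem_range_self _
  rw [← image_preimage_eq_of_subset hsub]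
  congr 1
  ext p
  exact isSextactic_rep_mk_iff _ _

theorem setOf_isSextactic_affine :
    {p : ℂ × ℂ | IsSextactic ![1, p.1, p.2]} =
      Prod.map (· ^ 3) (· ^ 3) ⁻¹' ↑({(1, -2), (-1 / 2, -1 / 2), (-2, 1)} : Finset (ℂ × ℂ)) := by
  ext ⟨y, z⟩
  simpa [IsSextactic] using fermat_hessian_affine_iff two_ne_zero (y ^ 3) (z ^ 3)

theorem ncard_setOf_isSextactic_affine : {p : ℂ × ℂ | IsSextactic ![1, p.1, p.2]}.ncard = 27 := by
  have hω : IsPrimitiveRoot (Complex.exp (2 * Real.pi * Complex.I / 3)) 3 :=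
    Complex.isPrimitiveRoot_exp 3 (by norm_num)
  have hfiber : ∀ ab ∈ ({(1, -2), (-1 / 2, -1 / 2), (-2, 1)} : Finset (ℂ × ℂ)),
      (Prod.map (· ^ 3) (· ^ 3) ⁻¹' {ab} : Set (ℂ × ℂ)).ncard = 9 := by
    simp only [Finset.mem_insert, Finset.mem_singleton, forall_eq_or_imp, forall_eq]
    refine ⟨?_, ?_, ?_⟩ <;>
      exact ncard_preimage_prodMap_pow_singleton hω (by norm_num) (by norm_num) (by norm_num)
  rw [setOf_isSextactic_affine, ncard_preimage_of_ncard_fiber_eq _ _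
    (fun ab hab => finite_of_ncard_ne_zero (by simp [hfiber ab hab])) hfiber,
    Finset.card_eq_three.2 ⟨_, _, _, by norm_num, by norm_num, by norm_num, rfl⟩]

end Fermat

open Fermat in
/-- The common zero locus in `ℙ²(ℂ)` of the Fermat cubic `x³+y³+z³` and of its second
Hessian `(x³-y³)(y³-z³)(z³-x³)` — the set of sextactic points — has exactly 27 points. -/
theorem sextactic_points_card :
    {P : P2 | P.rep 0 ^ 3 + P.rep 1 ^ 3 + P.rep 2 ^ 3 = 0 ∧
      (P.rep 0 ^ 3 - P.rep 1 ^ 3) * (P.rep 1 ^ 3 - P.rep 2 ^ 3) *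
        (P.rep 2 ^ 3 - P.rep 0 ^ 3) = 0}.ncard = 27 := by
  change {P : P2 | IsSextactic P.rep}.ncard = 27
  rw [setOf_isSextactic_rep, ncard_image_of_injective _ affineChart_injective,
    ncard_setOf_isSextactic_affine]
end
end
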